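/- For γ₁, γ₂ ∈ ℂ, there exists an isomorphism of the type (iii) algebras A_{γ₁} and A_{γ₂} (a ℂ-linear bijection φ : A_{γ₁} → A_{γ₂} with φ(uv) = φ(u)φ(v) for all u,v) if and only if γ₂ = γ₁ or γ₂ = −γ₁. -/

import Mathlib

/-- `lpow μ x k` is the left-normed power `x^(k+1)`; so `lpow μ x 0 = x`,
`lpow μ x 1 = x·x = x²`, `lpow μ x 2 = x·x² = x³`, etc. -/
def lpow {A : Type*} [AddCommGroup A] [Module ℂ A]
    (μ : A →ₗ[ℂ] A →ₗ[ℂ] A) (x : A) : ℕ → A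
  | 0 => x
  | n + 1 => μ x (lpow μ x n)
/-- The 3-dimensional cyclic Leibniz algebra of type (iii) with parameter γ:
A_γ = ℂ³ with basis a = e₀, a² = e₁, a³ = e₂ and multiplication u·v = u₀ • L_a(v),
where L_a(a) = a², L_a(a²) = a³, L_a(a³) = a² + γa³ (so a²·v = a³·v = 0). -/
noncomputable def mulIII (γ : ℂ) : (Fin 3 → ℂ) →ₗ[ℂ] (Fin 3 → ℂ) →ₗ[ℂ] (Fin 3 → ℂ) :=
  (LinearMap.proj 0).smulRight (Matrix.mulVecLin !![0,0,0;1,0,1;0,1,γ])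

noncomputable def a : Fin 3 → ℂ := ![1,0,0]
noncomputable def a2 : Fin 3 → ℂ := ![0,1,0]
noncomputable def a3 : Fin 3 → ℂ := ![0,0,1]

/-!
Vectors with vanishing `0`-th coordinate form the span `I` of `a²`, `a³`, which is the left
annihilator, so an isomorphism `φ` maps `I` into `I`. On `I`, left multiplication by `x` is
`x 0 • L_γ` with `L_γ = [[0, 1], [1, γ]]`, and `L_γ² = 1 + γ L_γ` (Cayley–Hamilton). Transporting
`a·(a·a²) = a² + γ₁ a·a²` along `φ` and comparing with the same relation for `x = φ a`, `α = x 0`,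
gives `φ ((α² - 1) • a² + (α γ₂ - γ₁) • a³) = 0`, hence `α = ±1` and `γ₁ = α γ₂`.
Conversely, `diag(-1, 1, -1)` is an isomorphism `A_γ ≅ A_{-γ}`.
-/

lemma mulIII_apply (γ : ℂ) (u v : Fin 3 → ℂ) :
    mulIII γ u v = u 0 • ![0, v 0 + v 2, v 1 + γ * v 2] := by
  ext i
  fin_cases i <;> simp [mulIII, dotProduct, Fin.sum_univ_three]

lemma mulIII_mulIII_of_apply_zero (γ : ℂ) (x : Fin 3 → ℂ) {u : Fin 3 → ℂ} (hu : u 0 = 0) :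
    mulIII γ x (mulIII γ x u) = (x 0 ^ 2) • u + (x 0 * γ) • mulIII γ x u := by
  ext i
  fin_cases i <;> simp [mulIII_apply, hu] <;> ring

lemma map_apply_zero_of_apply_zero {γ₁ γ₂ : ℂ} {φ : (Fin 3 → ℂ) →ₗ[ℂ] (Fin 3 → ℂ)}
    (hsurj : Function.Surjective φ)
    (hφ : ∀ u v, φ (mulIII γ₁ u v) = mulIII γ₂ (φ u) (φ v)) {u : Fin 3 → ℂ} (hu : u 0 = 0) :
    φ u 0 = 0 := by
  obtain ⟨v, hv⟩ := hsurj a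
  simpa [mulIII_apply, hu, hv, a] using (congrFun (hφ u v) 1).symm

lemma eq_or_eq_neg_of_mulIII_equiv {γ₁ γ₂ : ℂ} (φ : (Fin 3 → ℂ) ≃ₗ[ℂ] (Fin 3 → ℂ))
    (hφ : ∀ u v, φ (mulIII γ₁ u v) = mulIII γ₂ (φ u) (φ v)) : γ₂ = γ₁ ∨ γ₂ = -γ₁ := by
  set α := φ a 0
  have ha2 : a2 0 = 0 := rfl
  have hsrc : mulIII γ₁ a (mulIII γ₁ a a2) = a2 + γ₁ • mulIII γ₁ a a2 := by
    simpa [a] using mulIII_mulIII_of_apply_zero γ₁ a ha2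
  have htgt : mulIII γ₂ (φ a) (mulIII γ₂ (φ a) (φ a2))
      = α ^ 2 • φ a2 + (α * γ₂) • mulIII γ₂ (φ a) (φ a2) :=
    mulIII_mulIII_of_apply_zero γ₂ (φ a)
      (map_apply_zero_of_apply_zero (φ := φ.toLinearMap) φ.surjective hφ ha2)
  have hker : φ ((α ^ 2 - 1) • a2 + (α * γ₂ - γ₁) • mulIII γ₁ a a2) = 0 := by
    have h := congrArg φ hsrc
    simp only [map_add, map_smul, hφ] at h ⊢
    linear_combination (norm := module) h - htgt
  rw [map_eq_zero_iff φ φ.injective] at hker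
  have hα : α ^ 2 = 1 := by
    simpa [mulIII_apply, a, a2, sub_eq_zero] using congrFun hker 1
  have hγ : α * γ₂ = γ₁ := by
    simpa [mulIII_apply, a, a2, sub_eq_zero] using congrFun hker 2
  rcases sq_eq_one_iff.mp hα with h | h <;> rw [h] at hγ
  · exact .inl (by simpa using hγ)
  · exact .inr (by linear_combination -hγ)

noncomputable def negOddCoords : (Fin 3 → ℂ) ≃ₗ[ℂ] (Fin 3 → ℂ) :=
  LinearEquiv.piCongrRight fun i => LinearEquiv.smulOfUnit (![-1, 1, -1] i)

lemma negOddCoords_apply (v : Fin 3 → ℂ) : negOddCoords v = ![-v 0, v 1, -v 2] := by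
  ext i
  fin_cases i <;> simp [negOddCoords, LinearEquiv.smulOfUnit]

lemma negOddCoords_mulIII (γ : ℂ) (u v : Fin 3 → ℂ) :
    negOddCoords (mulIII γ u v) = mulIII (-γ) (negOddCoords u) (negOddCoords v) := by
  ext i
  fin_cases i <;> simp [negOddCoords_apply, mulIII_apply]
  ring

/-- The type (iii) algebras A_{γ₁} and A_{γ₂} are isomorphic (via a
ℂ-linear bijection preserving the multiplication) iff γ₂ = γ₁ or γ₂ = −γ₁. -/
theorem typeIII_iso_iff (γ₁ γ₂ : ℂ) :
    (∃ φ : (Fin 3 → ℂ) ≃ₗ[ℂ] (Fin 3 → ℂ),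
        ∀ u v : Fin 3 → ℂ, φ (mulIII γ₁ u v) = mulIII γ₂ (φ u) (φ v)) ↔
      (γ₂ = γ₁ ∨ γ₂ = -γ₁) := by
  refine ⟨fun ⟨φ, hφ⟩ => eq_or_eq_neg_of_mulIII_equiv φ hφ, ?_⟩
  rintro (rfl | rfl)
  · exact ⟨LinearEquiv.refl ℂ _, fun _ _ => rfl⟩
  · exact ⟨negOddCoords, negOddCoords_mulIII γ₁⟩
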